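/- arXiv:2101.09955 — 8 statements merged into one kernel-verified Lean document; each statement's English description precedes it below -/
import Mathlib

section
/- In an associative ring with elements a and b satisfying a*b - b*a = b^2, for every polynomial S ∈ ℂ[X] one has a * S(b) = S(b) * a + b^2 * S'(b), where S' denotes the formal derivative of S. -/
lemma comm_pow_aux {R : Type*} [Ring R] [Algebra ℂ R] (a b : R)
    (h : a * b - b * a = b ^ 2) (n : ℕ) :
    a * b ^ n = b ^ n * a + (n : R) * b ^ (n + 1) := by
  have hab : a * b = b * a + b ^ 2 := by
    rw [← h]; noncomm_ring
  induction n with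
  | zero => simp
  | succ n ih =>
    have h1 : a * b ^ (n + 1) = (a * b ^ n) * b := by
      rw [pow_succ, ← mul_assoc]
    rw [h1, ih, add_mul, mul_assoc _ a b, hab]
    rw [mul_add, ← mul_assoc, ← pow_succ, ← pow_add, mul_assoc ((n : ℕ) : R), ← pow_succ]
    push_cast
    rw [add_mul, one_mul]
    simp only [show n + 1 + 1 = n + 2 from rfl]
    abel
/-- In an associative ℂ-algebra with `a*b - b*a = b^2`, for every polynomial `S ∈ ℂ[X]`,
`a * S(b) = S(b) * a + b^2 * S'(b)`. -/
theorem commutation_polynomial {R : Type*} [Ring R] [Algebra ℂ R] (a b : R)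
    (h : a * b - b * a = b ^ 2) (S : Polynomial ℂ) :
    a * Polynomial.aeval b S =
      Polynomial.aeval b S * a + b ^ 2 * Polynomial.aeval b (Polynomial.derivative S) := by
  induction S using Polynomial.induction_on with
  | C c => simp [Algebra.commutes]
  | add p q hp hq =>
    simp only [map_add, mul_add, add_mul] at *
    rw [hp, hq]
    abel
  | monomial n c ih =>
    simp only [map_mul, map_pow, Polynomial.aeval_C, Polynomial.aeval_X,
      Polynomial.derivative_C_mul, Polynomial.derivative_X_pow, map_natCast,
      Nat.add_sub_cancel]
    push_cast
    set M := algebraMap ℂ R c with hMdef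
    have hM : ∀ x : R, M * x = x * M := fun x => Algebra.commutes c x
    have key := comm_pow_aux a b h (n + 1)
    push_cast at key
    have c1 : Commute (b ^ 2) M := (hM (b ^ 2)).symm
    have c2 : Commute (b ^ 2) ((n : R) + 1) :=
      ((Nat.cast_commute n (b ^ 2)).symm).add_right (Commute.one_right _)
    have c3 : Commute (b ^ 2) (b ^ n) := (Commute.refl b).pow_pow 2 n
    have cb : Commute (b ^ 2) (M * (((n : R) + 1) * b ^ n)) :=
      c1.mul_right (c2.mul_right c3)
    calc a * (M * b ^ (n + 1)) = M * (a * b ^ (n + 1)) := by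
          rw [← mul_assoc, ← hM a, mul_assoc]
      _ = M * (b ^ (n + 1) * a) + M * (((n : R) + 1) * b ^ (n + 1 + 1)) := by
          rw [key, mul_add]
      _ = M * b ^ (n + 1) * a + b ^ 2 * (M * (((n : R) + 1) * b ^ n)) := by
          congr 1
          · rw [mul_assoc]
          · rw [cb.eq, mul_assoc, mul_assoc, ← pow_add]
end

section
/- Let A be the free associative ℂ-algebra generated by a and b modulo the two-sided ideal generated by a*b - b*a - b^2. Then for every natural number m, the left ideal A*b^m equals the right ideal b^m*A; in particular b^m*A is a two-sided ideal of A. -/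
/-- The relation `a*b = b*a + b^2` on the free algebra ℂ⟨a,b⟩ (with `true ↦ a`, `false ↦ b`). -/
inductive ABRel : FreeAlgebra ℂ Bool → FreeAlgebra ℂ Bool → Prop
  | rel : ABRel (FreeAlgebra.ι ℂ true * FreeAlgebra.ι ℂ false)
      (FreeAlgebra.ι ℂ false * FreeAlgebra.ι ℂ true +
        FreeAlgebra.ι ℂ false * FreeAlgebra.ι ℂ false)

/-- The generator `a` of `A = ℂ⟨a,b⟩/(ab - ba - b²)`. -/
noncomputable def aGen : RingQuot ABRel := RingQuot.mkAlgHom ℂ ABRel (FreeAlgebra.ι ℂ true)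

/-- The generator `b` of `A = ℂ⟨a,b⟩/(ab - ba - b²)`. -/
noncomputable def bGen : RingQuot ABRel := RingQuot.mkAlgHom ℂ ABRel (FreeAlgebra.ι ℂ false)

lemma ab_rel : aGen * bGen = bGen * aGen + bGen * bGen := by
  have h := RingQuot.mkAlgHom_rel ℂ ABRel.rel
  simpa [aGen, bGen, map_mul, map_add] using h

lemma a_pow_comm (m : ℕ) :
    aGen * bGen ^ m = bGen ^ m * aGen + (m : RingQuot ABRel) * bGen ^ (m + 1) := by
  induction m with
  | zero => simp
  | succ n ih =>
    have hc : Commute ((n : RingQuot ABRel)) bGen := Nat.cast_commute n bGen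
    rw [pow_succ', ← mul_assoc, ab_rel, add_mul, mul_assoc bGen aGen, ih,
      mul_add, ← mul_assoc, ← pow_succ', hc.symm.left_comm, ← pow_succ',
      mul_assoc bGen bGen, ← pow_succ', ← pow_succ']
    push_cast
    rw [add_mul, one_mul, ← add_assoc]

/-- Every element moves left past `bGen ^ m`. -/
lemma right_to_left (m : ℕ) (y : RingQuot ABRel) :
    ∃ z, bGen ^ m * y = z * bGen ^ m := by
  obtain ⟨p, rfl⟩ := RingQuot.mkAlgHom_surjective ℂ ABRel y
  induction p using FreeAlgebra.induction with
  | grade0 r =>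
    exact ⟨algebraMap ℂ _ r, by rw [AlgHom.commutes, Algebra.commutes]⟩
  | grade1 x =>
    cases x with
    | true =>
      refine ⟨aGen - (m : RingQuot ABRel) * bGen, ?_⟩
      show bGen ^ m * aGen = _
      have h := a_pow_comm m
      rw [sub_mul, eq_sub_iff_add_eq, mul_assoc, ← pow_succ', ← h]
    | false =>
      exact ⟨bGen, by show bGen ^ m * bGen = bGen * bGen ^ m; rw [← pow_succ, pow_succ']⟩
  | mul p q hp hq =>
    obtain ⟨zp, hzp⟩ := hp
    obtain ⟨zq, hzq⟩ := hq
    refine ⟨zp * zq, ?_⟩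
    rw [map_mul, ← mul_assoc, hzp, mul_assoc, hzq, ← mul_assoc]
  | add p q hp hq =>
    obtain ⟨zp, hzp⟩ := hp
    obtain ⟨zq, hzq⟩ := hq
    exact ⟨zp + zq, by rw [map_add, mul_add, hzp, hzq, add_mul]⟩

/-- Every element moves right past `bGen ^ m`. -/
lemma left_to_right (m : ℕ) (y : RingQuot ABRel) :
    ∃ z, y * bGen ^ m = bGen ^ m * z := by
  obtain ⟨p, rfl⟩ := RingQuot.mkAlgHom_surjective ℂ ABRel y
  induction p using FreeAlgebra.induction with
  | grade0 r =>
    exact ⟨algebraMap ℂ _ r, by rw [AlgHom.commutes, Algebra.commutes]⟩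
  | grade1 x =>
    cases x with
    | true =>
      refine ⟨aGen + (m : RingQuot ABRel) * bGen, ?_⟩
      show aGen * bGen ^ m = _
      have hc : Commute ((m : RingQuot ABRel)) (bGen ^ m) := Nat.cast_commute m (bGen ^ m)
      rw [a_pow_comm, mul_add, hc.symm.left_comm, ← pow_succ]
    | false =>
      exact ⟨bGen, by show bGen * bGen ^ m = bGen ^ m * bGen; rw [← pow_succ', pow_succ]⟩
  | mul p q hp hq =>
    obtain ⟨zp, hzp⟩ := hp
    obtain ⟨zq, hzq⟩ := hq
    refine ⟨zp * zq, ?_⟩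
    rw [map_mul, mul_assoc, hzq, ← mul_assoc, hzp, mul_assoc]
  | add p q hp hq =>
    obtain ⟨zp, hzp⟩ := hp
    obtain ⟨zq, hzq⟩ := hq
    exact ⟨zp + zq, by rw [map_add, add_mul, hzp, hzq, mul_add]⟩

/-- In `A = ℂ⟨a,b⟩/(ab - ba - b²)`, the left ideal `A·b^m` equals the right ideal `b^m·A`
for every natural number `m`. -/
theorem left_ideal_eq_right_ideal (m : ℕ) :
    {x : RingQuot ABRel | ∃ y, x = y * bGen ^ m} = {x : RingQuot ABRel | ∃ y, x = bGen ^ m * y} := by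
  ext x
  constructor
  · rintro ⟨y, rfl⟩
    obtain ⟨z, hz⟩ := left_to_right m y
    exact ⟨z, hz⟩
  · rintro ⟨y, rfl⟩
    obtain ⟨z, hz⟩ := right_to_left m y
    exact ⟨z, hz⟩
end

section
/- Let E := ⊕_{j=1}^k ℂ[b]·e_j be a free ℂ[b]-module with basis e_1,…,e_k and let x_1,…,x_k be arbitrary elements of E. Then there exists a unique structure of left module over the algebra A = ℂ⟨a,b⟩/(ab - ba - b^2) on E such that b acts via the given ℂ[b]-module structure and a·e_j = x_j for each j. Moreover the action of a is necessarily given by a·(S(b)·e_j) = S(b)·x_j + b^2·S'(b)·e_j for every polynomial S. -/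
/-- The operator `b` on `E = ℂ[b]^k`: multiplication by the variable `X` in each coordinate. -/
noncomputable def bOp (k : ℕ) : (Fin k → Polynomial ℂ) →ₗ[ℂ] (Fin k → Polynomial ℂ) where
  toFun f := fun j => Polynomial.X * f j
  map_add' f g := by funext j; simp [mul_add]
  map_smul' c f := by funext j; simp [mul_smul_comm]

open Polynomial in
/-- Candidate operator for `a`. -/
noncomputable def aOp (k : ℕ) (x : Fin k → (Fin k → Polynomial ℂ)) :
    (Fin k → Polynomial ℂ) →ₗ[ℂ] (Fin k → Polynomial ℂ) where
  toFun f := fun j' => (∑ j, f j * x j j') + X ^ 2 * derivative (f j')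
  map_add' f g := by
    funext j'
    simp [add_mul, Finset.sum_add_distrib, mul_add]
    ring
  map_smul' c f := by
    funext j'
    simp [Polynomial.smul_eq_C_mul, Finset.mul_sum, mul_add, mul_assoc, mul_left_comm]

lemma bOp_eq {k : ℕ} (v : Fin k → Polynomial ℂ) : bOp k v = (Polynomial.X : Polynomial ℂ) • v := by
  funext j; simp [bOp]

lemma single_smul_eq {k : ℕ} (S : Polynomial ℂ) (j : Fin k) :
    S • (Pi.single j 1 : Fin k → Polynomial ℂ) = Pi.single j S := by
  funext i
  rcases eq_or_ne i j with h | h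
  · subst h; simp
  · simp [Pi.single_apply, h]

open Polynomial in
lemma key_formula {k : ℕ} (x : Fin k → (Fin k → Polynomial ℂ))
    (A : (Fin k → Polynomial ℂ) →ₗ[ℂ] (Fin k → Polynomial ℂ))
    (hcomm : A ∘ₗ bOp k - bOp k ∘ₗ A = bOp k ∘ₗ bOp k)
    (hinit : ∀ j : Fin k, A (Pi.single j 1) = x j) :
    ∀ (S : Polynomial ℂ) (j : Fin k),
      A (S • (Pi.single j 1 : Fin k → Polynomial ℂ)) =
        S • x j + (X ^ 2 * derivative S) • (Pi.single j 1 : Fin k → Polynomial ℂ) := by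
  have hX : ∀ v : Fin k → Polynomial ℂ,
      A ((X : ℂ[X]) • v) = (X : ℂ[X]) • A v + ((X : ℂ[X]) ^ 2) • v := by
    intro v
    have h := congrArg (fun (T : (Fin k → Polynomial ℂ) →ₗ[ℂ] (Fin k → Polynomial ℂ)) => T v) hcomm
    simp only [LinearMap.sub_apply, LinearMap.comp_apply] at h
    simp only [bOp_eq] at h
    have : A (X • v) - X • A v = X • X • v := h
    rw [sub_eq_iff_eq_add] at this
    rw [this, smul_smul, ← sq]
    abel
  intro S j
  induction S using Polynomial.induction_on with
  | C c =>
      have : (C c : Polynomial ℂ) • (Pi.single j 1 : Fin k → Polynomial ℂ)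
          = c • (Pi.single j 1 : Fin k → Polynomial ℂ) := by
        funext i; simp [Polynomial.smul_eq_C_mul]
      rw [this, map_smul, hinit]
      funext i
      simp [Polynomial.smul_eq_C_mul]
  | add p q hp hq =>
      rw [add_smul, map_add, hp, hq, derivative_add, mul_add, add_smul, add_smul]
      abel
  | monomial n c hn =>
      have hrw : (C c * X ^ (n + 1)) • (Pi.single j 1 : Fin k → Polynomial ℂ)
          = (X : ℂ[X]) • ((C c * X ^ n) • (Pi.single j 1 : Fin k → Polynomial ℂ)) := by
        rw [smul_smul]; ring_nf
      rw [hrw, hX, hn]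
      rw [smul_add, smul_smul, smul_smul, smul_smul]
      have hd : derivative (C c * X ^ (n + 1)) = C c * X ^ n + X * derivative (C c * X ^ n) := by
        cases n with
        | zero => simp
        | succ m =>
            simp only [derivative_C_mul, derivative_X_pow, Nat.add_sub_cancel]
            push_cast
            simp only [map_add, map_one, map_ofNat]
            ring
      rw [hd]
      rw [mul_add, add_smul]
      have h1 : X * (C c * X ^ n) = C c * X ^ (n + 1) := by ring
      rw [h1]
      have h2 : X * (X ^ 2 * derivative (C c * X ^ n)) = X ^ 2 * (X * derivative (C c * X ^ n)) := by ring
      rw [h2]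
      abel

open Polynomial in
lemma decomp {k : ℕ} (f : Fin k → Polynomial ℂ) :
    f = ∑ j, (f j) • (Pi.single j 1 : Fin k → Polynomial ℂ) := by
  conv_lhs => rw [← Finset.univ_sum_single f]
  refine Finset.sum_congr rfl fun j _ => ?_
  rw [single_smul_eq]

open Polynomial in
/-- Let `E = ⊕_{j=1}^k ℂ[b]·e_j` be free over `ℂ[b]` with basis `e_j` and let `x_j ∈ E` be
arbitrary.  There is a unique ℂ-linear action `A` of `a` on `E` satisfying the commutation
relation `a∘b - b∘a = b∘b` (so that `E` becomes a module over `ℂ⟨a,b⟩/(ab-ba-b²)` where `b`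
acts through the `ℂ[b]`-structure) with `a·e_j = x_j`; moreover any such action necessarily
satisfies `a·(S(b)·e_j) = S(b)·x_j + b²·S'(b)·e_j` for every polynomial `S`. -/
theorem unique_a_module_structure (k : ℕ) (x : Fin k → (Fin k → Polynomial ℂ)) :
    (∃! A : (Fin k → Polynomial ℂ) →ₗ[ℂ] (Fin k → Polynomial ℂ),
      (A ∘ₗ bOp k - bOp k ∘ₗ A = bOp k ∘ₗ bOp k) ∧
      ∀ j : Fin k, A (Pi.single j 1) = x j) ∧
    (∀ A : (Fin k → Polynomial ℂ) →ₗ[ℂ] (Fin k → Polynomial ℂ),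
      (A ∘ₗ bOp k - bOp k ∘ₗ A = bOp k ∘ₗ bOp k) →
      (∀ j : Fin k, A (Pi.single j 1) = x j) →
      ∀ (S : Polynomial ℂ) (j : Fin k),
        A (S • (Pi.single j 1 : Fin k → Polynomial ℂ)) =
          S • x j + (Polynomial.X ^ 2 * Polynomial.derivative S) •
            (Pi.single j 1 : Fin k → Polynomial ℂ)) := by
  constructor
  · refine ⟨aOp k x, ⟨?_, ?_⟩, ?_⟩
    · -- commutation for aOp
      apply LinearMap.ext
      intro v
      funext j'
      simp only [LinearMap.sub_apply, LinearMap.comp_apply, aOp, bOp, LinearMap.coe_mk,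
        AddHom.coe_mk, Pi.sub_apply]
      simp [Finset.mul_sum, mul_add, mul_assoc, mul_left_comm, add_mul]
      ring
    · -- initial condition
      intro j
      funext j'
      simp only [aOp, LinearMap.coe_mk, AddHom.coe_mk]
      have : ∀ i : Fin k, (Pi.single j 1 : Fin k → Polynomial ℂ) i * x i j'
          = if i = j then x j j' else 0 := by
        intro i
        rcases eq_or_ne i j with h | h
        · subst h; simp
        · simp [Pi.single_apply, h]
      rw [Finset.sum_congr rfl fun i _ => this i]
      rcases eq_or_ne j' j with h | h
      · subst h; simp
      · simp [Pi.single_apply, h]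
    · -- uniqueness
      intro A ⟨hcomm, hinit⟩
      apply LinearMap.ext
      intro f
      rw [decomp f, map_sum, map_sum]
      refine Finset.sum_congr rfl fun j _ => ?_
      rw [key_formula x A hcomm hinit]
      rw [key_formula x (aOp k x) ?hc ?hi]
      case hc =>
        apply LinearMap.ext
        intro v
        funext j'
        simp only [LinearMap.sub_apply, LinearMap.comp_apply, aOp, bOp, LinearMap.coe_mk,
          AddHom.coe_mk, Pi.sub_apply]
        simp [Finset.mul_sum, mul_add, mul_assoc, mul_left_comm, add_mul]
        ring
      case hi =>
        intro j
        funext j'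
        simp only [aOp, LinearMap.coe_mk, AddHom.coe_mk]
        have : ∀ i : Fin k, (Pi.single j 1 : Fin k → Polynomial ℂ) i * x i j'
            = if i = j then x j j' else 0 := by
          intro i
          rcases eq_or_ne i j with h | h
          · subst h; simp
          · simp [Pi.single_apply, h]
        rw [Finset.sum_congr rfl fun i _ => this i]
        rcases eq_or_ne j' j with h | h
        · subst h; simp
        · simp [Pi.single_apply, h]
  · intro A hcomm hinit
    exact key_formula x A hcomm hinit
end

section
/- Let α_1, …, α_{n+2} ∈ ℕ^{n+1} be such that α_1, …, α_{n+1} form a ℚ-basis of ℚ^{n+1}, write α_{n+2} = Σ ρ_j α_j with ρ_j ∈ ℚ, and let |r| ≥ 1 be the smallest positive integer such that p_j := |r|·ρ_j ∈ ℤ for all j. Assume the (n+2)×(n+2) matrix M̃ obtained by adjoining the row (1,…,1) on top of the matrix with columns α_1,…,α_{n+2} has rank n+2. Then the two nonnegative integers A := |r| + Σ_{j: ρ_j<0} (-p_j) and B := Σ_{j: ρ_j>0} p_j are both positive and A ≠ B. -/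
/-!
`A > 0` since `r ≥ 1` and `-p_j > 0` whenever `ρ_j < 0`; `B > 0` since the nonzero vector
`α_{n+2} ≥ 0` cannot be a combination of the nonnegative `α_j` with all coefficients `ρ_j ≤ 0`.
As `p_j = 0` when `ρ_j = 0`, `A - B = r - Σ p_j = r (1 - Σ ρ_j)`. So `A = B` forces `Σ ρ_j = 1`,
and then `(ρ, -1)` is a nonzero kernel vector of `M̃`, contradicting `rank M̃ = n + 2`.
-/

open Finset Matrix

theorem Matrix.mulVec_injective_of_rank_eq_card_width {K m n : Type*} [Field K] [Fintype n]
    {M : Matrix m n K} (h : M.rank = Fintype.card n) : Function.Injective M.mulVec :=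
  Matrix.mulVec_injective_iff.mpr <|
    linearIndependent_iff_card_eq_finrank_span.mpr (h.symm.trans M.rank_eq_finrank_span_cols)

theorem mulVec_cons_one_snoc_eq_zero {R : Type*} [CommRing R] {k m : ℕ}
    (β : Fin (m + 1) → Fin k → R) (ρ : Fin m → R)
    (hρ : ∀ i, β (Fin.last m) i = ∑ j, ρ j * β j.castSucc i) (hsum : ∑ j, ρ j = 1) :
    Matrix.of (Fin.cons (fun _ => (1 : R)) fun i c => β c i) *ᵥ Fin.snoc ρ (-1) = 0 := by
  ext i
  refine Fin.cases ?_ (fun i => ?_) i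
  · simp [Matrix.mulVec, dotProduct, Fin.sum_univ_castSucc, hsum]
  · simp [Matrix.mulVec, dotProduct, Fin.sum_univ_castSucc, hρ i, mul_comm]

theorem sum_filter_pos_add_sum_filter_neg {ι K M : Type*} [Fintype ι] [Zero K] [LinearOrder K]
    [AddCommMonoid M] (ρ : ι → K) (p : ι → M) (hp : ∀ j, ρ j = 0 → p j = 0) :
    ∑ j ∈ univ.filter (fun j => 0 < ρ j), p j + ∑ j ∈ univ.filter (fun j => ρ j < 0), p j =
      ∑ j, p j := by
  rw [sum_filter, sum_filter, ← sum_add_distrib]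
  refine sum_congr rfl fun j _ => ?_
  rcases lt_trichotomy (ρ j) 0 with h | h | h
  · simp [h, h.not_gt]
  · simp [h, hp j h]
  · simp [h, h.not_gt]

theorem exists_pos_of_sum_mul_pos {ι K : Type*} [Fintype ι] [Field K] [LinearOrder K]
    [IsStrictOrderedRing K] (ρ b : ι → K) (hb : ∀ j, 0 ≤ b j) (h : 0 < ∑ j, ρ j * b j) :
    ∃ j, 0 < ρ j := by
  by_contra! hρ
  exact h.not_ge (sum_nonpos fun j _ => mul_nonpos_of_nonpos_of_nonneg (hρ j) (hb j))

theorem degrees_positive_and_distinct_general (n : ℕ) (α : Fin (n + 2) → Fin (n + 1) → ℕ)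
    (hα : ∀ j, α j ≠ 0)
    (ρ : Fin (n + 1) → ℚ)
    (hρ : ∀ i, (α (Fin.last (n + 1)) i : ℚ) = ∑ j, ρ j * (α j.castSucc i : ℚ))
    (r : ℕ) (hr : 0 < r)
    (p : Fin (n + 1) → ℤ) (hp : ∀ j, (p j : ℚ) = (r : ℚ) * ρ j)
    (hrank : (Matrix.of (Fin.cons (fun _ => (1 : ℚ))
        fun (i : Fin (n + 1)) (c : Fin (n + 2)) => (α c i : ℚ))).rank = n + 2) :
    0 < (r : ℤ) + ∑ j ∈ Finset.univ.filter (fun j => ρ j < 0), (-(p j)) ∧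
    0 < ∑ j ∈ Finset.univ.filter (fun j => 0 < ρ j), p j ∧
    (r : ℤ) + ∑ j ∈ Finset.univ.filter (fun j => ρ j < 0), (-(p j)) ≠
      ∑ j ∈ Finset.univ.filter (fun j => 0 < ρ j), p j := by
  have hrQ : (0 : ℚ) < r := by exact_mod_cast hr
  have hp_pos : ∀ j, 0 < ρ j → 0 < p j := fun j h => by exact_mod_cast hp j ▸ mul_pos hrQ h
  have hp_neg : ∀ j, ρ j < 0 → p j < 0 := fun j h => by
    exact_mod_cast hp j ▸ mul_neg_of_pos_of_neg hrQ h
  have hA : 0 < (r : ℤ) + ∑ j ∈ univ.filter (fun j => ρ j < 0), (-(p j)) :=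
    add_pos_of_pos_of_nonneg (by exact_mod_cast hr)
      (sum_nonneg fun j hj => neg_nonneg.mpr (hp_neg j (mem_filter.mp hj).2).le)
  obtain ⟨i, hi⟩ := Function.ne_iff.mp (hα (Fin.last (n + 1)))
  obtain ⟨j₀, hj₀⟩ := exists_pos_of_sum_mul_pos ρ (fun j => (α j.castSucc i : ℚ))
    (fun j => Nat.cast_nonneg _) (hρ i ▸ Nat.cast_pos.mpr (Nat.pos_of_ne_zero hi))
  have hB : 0 < ∑ j ∈ univ.filter (fun j => 0 < ρ j), p j :=
    sum_pos' (fun j hj => (hp_pos j (mem_filter.mp hj).2).le)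
      ⟨j₀, mem_filter.mpr ⟨mem_univ _, hj₀⟩, hp_pos j₀ hj₀⟩
  refine ⟨hA, hB, fun hAB => ?_⟩
  have hsum_p : (r : ℤ) = ∑ j, p j := by
    have hp_zero : ∀ j, ρ j = 0 → p j = 0 := fun j h =>
      Int.cast_eq_zero.mp <| (hp j).trans (by rw [h, mul_zero])
    rw [← sum_filter_pos_add_sum_filter_neg ρ p hp_zero]
    rw [sum_neg_distrib] at hAB
    linarith
  have hsum_ρ : ∑ j, ρ j = 1 := by
    have : (r : ℚ) = r * ∑ j, ρ j := by
      rw [mul_sum, ← sum_congr rfl fun j _ => hp j]; exact_mod_cast hsum_p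
    exact (mul_eq_left₀ hrQ.ne').mp this.symm
  have hker := mulVec_cons_one_snoc_eq_zero (fun c i => (α c i : ℚ)) ρ hρ hsum_ρ
  have hv := Matrix.mulVec_injective_of_rank_eq_card_width (by simpa using hrank)
    (hker.trans (mulVec_zero _).symm)
  simpa using congrFun hv (Fin.last _)

/-- Let `α_1,…,α_{n+2} ∈ ℕ^{n+1}` be nonzero, with `α_1,…,α_{n+1}` a ℚ-basis of `ℚ^{n+1}`,
`α_{n+2} = Σ ρ_j α_j`, `r ≥ 1` minimal such that `p_j := r·ρ_j ∈ ℤ` for all `j`, and assume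
the matrix `M̃` (all-ones row adjoined on top of the matrix of columns `α_1,…,α_{n+2}`) has
rank `n+2`.  Then `A := r + Σ_{ρ_j<0}(-p_j)` and `B := Σ_{ρ_j>0} p_j` are both positive,
and `A ≠ B`. -/
theorem degrees_positive_and_distinct (n : ℕ) (α : Fin (n + 2) → Fin (n + 1) → ℕ)
    (hα : ∀ j, α j ≠ 0)
    (hbasis : LinearIndependent ℚ (fun (j : Fin (n + 1)) (i : Fin (n + 1)) =>
      (α j.castSucc i : ℚ)))
    (ρ : Fin (n + 1) → ℚ)
    (hρ : ∀ i, (α (Fin.last (n + 1)) i : ℚ) = ∑ j, ρ j * (α j.castSucc i : ℚ))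
    (r : ℕ) (hr : 0 < r)
    (p : Fin (n + 1) → ℤ) (hp : ∀ j, (p j : ℚ) = (r : ℚ) * ρ j)
    (hmin : ∀ r' : ℕ, 0 < r' → (∀ j, ∃ q : ℤ, (q : ℚ) = (r' : ℚ) * ρ j) → r ≤ r')
    (hrank : (Matrix.of (Fin.cons (fun _ => (1 : ℚ))
        fun (i : Fin (n + 1)) (c : Fin (n + 2)) => (α c i : ℚ))).rank = n + 2) :
    0 < (r : ℤ) + ∑ j ∈ Finset.univ.filter (fun j => ρ j < 0), (-(p j)) ∧
    0 < ∑ j ∈ Finset.univ.filter (fun j => 0 < ρ j), p j ∧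
    (r : ℤ) + ∑ j ∈ Finset.univ.filter (fun j => ρ j < 0), (-(p j)) ≠
      ∑ j ∈ Finset.univ.filter (fun j => 0 < ρ j), p j :=
  degrees_positive_and_distinct_general n α hα ρ hρ r hr p hp hrank
end

section
/- For the polynomial f(x,y,z) = x·y^3 + y·z^3 + z·x^3 + λ·x·y·z with λ ∈ ℂ*, the singular locus of the hypersurface {f = 0} ⊂ ℂ^3 is the origin: if f and all its partial derivatives vanish at (x,y,z), then (x,y,z) = (0,0,0). -/
/-- For `f(x,y,z) = xy³ + yz³ + zx³ + λxyz` with `λ ≠ 0`, the singular locus of `{f = 0} ⊂ ℂ³`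
is the origin: a common zero of `f` and its partial derivatives is the origin. -/
theorem isolated_singularity_example2 (l : ℂ) (hl : l ≠ 0) (x y z : ℂ)
    (hf : x * y ^ 3 + y * z ^ 3 + z * x ^ 3 + l * x * y * z = 0)
    (hx : y ^ 3 + 3 * z * x ^ 2 + l * y * z = 0)
    (hy : 3 * x * y ^ 2 + z ^ 3 + l * x * z = 0)
    (hz : 3 * y * z ^ 2 + x ^ 3 + l * x * y = 0) :
    x = 0 ∧ y = 0 ∧ z = 0 := by
  have hxyz : x * y * z = 0 := by
    have h : l * (x * y * z) = 0 := by linear_combination 4 * hf - x * hx - y * hy - z * hz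
    exact (mul_eq_zero.mp h).resolve_left hl
  rcases mul_eq_zero.mp hxyz with h | hz0
  · rcases mul_eq_zero.mp h with hx0 | hy0
    · -- x = 0
      have hz3 : z = 0 := by
        have : z ^ 3 = 0 := by linear_combination hy - 3 * y ^ 2 * hx0 - l * z * hx0
        exact pow_eq_zero_iff (by norm_num) |>.mp this
      have hy3 : y = 0 := by
        have : y ^ 3 = 0 := by
          linear_combination hx - 3 * z * x * hx0 - l * y * hz3
        exact pow_eq_zero_iff (by norm_num) |>.mp this
      exact ⟨hx0, hy3, hz3⟩
    · -- y = 0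
      have hx3 : x = 0 := by
        have : x ^ 3 = 0 := by linear_combination hz - 3 * z ^ 2 * hy0 - l * x * hy0
        exact pow_eq_zero_iff (by norm_num) |>.mp this
      have hz3 : z = 0 := by
        have : z ^ 3 = 0 := by linear_combination hy - 3 * x * y * hy0 - l * z * hx3
        exact pow_eq_zero_iff (by norm_num) |>.mp this
      exact ⟨hx3, hy0, hz3⟩
  · -- z = 0
    have hy3 : y = 0 := by
      have : y ^ 3 = 0 := by linear_combination hx - 3 * x ^ 2 * hz0 - l * y * hz0
      exact pow_eq_zero_iff (by norm_num) |>.mp this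
    have hx3 : x = 0 := by
      have : x ^ 3 = 0 := by linear_combination hz - 3 * y * z * hz0 - l * x * hy3
      exact pow_eq_zero_iff (by norm_num) |>.mp this
    exact ⟨hx3, hy3, hz0⟩
end

section
/- For f(x,y,z,t) = x·y^2 + x^2·y + z·t^3 + t·z^3 + λ·x·y·z·t with λ ∈ ℂ*, the hypersurface {f = 0} ⊂ ℂ^4 has an isolated singularity at the origin: if f = 0 and df = 0 at a point of ℂ^4, that point is (0,0,0,0). -/
/-- For `f(x,y,z,t) = xy² + x²y + zt³ + tz³ + λxyzt` with `λ ≠ 0`, the hypersurface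
`{f = 0} ⊂ ℂ⁴` has an isolated singularity at the origin: a common zero of `f` and its
partial derivatives is the origin. -/
theorem isolated_singularity_example3 (l : ℂ) (hl : l ≠ 0) (x y z t : ℂ)
    (hf : x * y ^ 2 + x ^ 2 * y + z * t ^ 3 + t * z ^ 3 + l * x * y * z * t = 0)
    (hx : y ^ 2 + 2 * x * y + l * y * z * t = 0)
    (hy : 2 * x * y + x ^ 2 + l * x * z * t = 0)
    (hz : t ^ 3 + 3 * t * z ^ 2 + l * x * y * t = 0)
    (ht : 3 * z * t ^ 2 + z ^ 3 + l * x * y * z = 0) :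
    x = 0 ∧ y = 0 ∧ z = 0 ∧ t = 0 := by
  have e1 : x ^ 2 * y = x * y ^ 2 := by linear_combination x * hx - y * hy
  have e2 : z ^ 3 * t = z * t ^ 3 := by linear_combination (z * hz - t * ht) / 2
  have e3 : 3 * (x * y ^ 2) = -(l * x * y * z * t) := by
    linear_combination x * hx - 2 * e1
  have e4 : 4 * (z * t ^ 3) = -(l * x * y * z * t) := by
    linear_combination z * hz - 3 * e2
  have hw : l * (x * y * z * t) = 0 := by
    linear_combination -6 * hf + 6 * e1 + 6 * e2 + 4 * e3 + 3 * e4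
  have hw0 : x * y * z * t = 0 := by
    rcases mul_eq_zero.mp hw with h | h
    · exact absurd h hl
    · exact h
  have hxy2 : x * y ^ 2 = 0 := by
    have h3 : (3 : ℂ) * (x * y ^ 2) = 0 := by linear_combination e3 - l * hw0
    have := mul_eq_zero.mp h3
    simpa using this
  have hzt3 : z * t ^ 3 = 0 := by
    have h4 : (4 : ℂ) * (z * t ^ 3) = 0 := by linear_combination e4 - l * hw0
    have := mul_eq_zero.mp h4
    simpa using this
  have hxy : x * y = 0 := by
    have hsq : (x * y) ^ 2 = 0 := by linear_combination x * hxy2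
    exact pow_eq_zero_iff (by norm_num) |>.mp hsq
  have hzt : z * t = 0 := by
    have hcu : (z * t) ^ 3 = 0 := by linear_combination z ^ 2 * hzt3
    exact pow_eq_zero_iff (by norm_num) |>.mp hcu
  have hy0 : y = 0 := by
    have : y ^ 2 = 0 := by linear_combination hx - 2 * hxy - l * y * hzt
    exact pow_eq_zero_iff (by norm_num) |>.mp this
  have hx0 : x = 0 := by
    have : x ^ 2 = 0 := by linear_combination hy - 2 * hxy - l * x * hzt
    exact pow_eq_zero_iff (by norm_num) |>.mp this
  have ht0 : t = 0 := by
    have : t ^ 3 = 0 := by linear_combination hz - 3 * z * hzt - l * t * hxy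
    exact pow_eq_zero_iff (by norm_num) |>.mp this
  have hz0 : z = 0 := by
    have : z ^ 3 = 0 := by linear_combination ht - 3 * t * hzt - l * z * hxy
    exact pow_eq_zero_iff (by norm_num) |>.mp this
  exact ⟨hx0, hy0, hz0, ht0⟩
end

section
/- Let E be a module over A = ℂ⟨a,b⟩/(ab - ba - b^2) which is free of finite rank over ℂ[[b]], and suppose there exists k ∈ ℕ* with a^k·E ⊂ b·E. Then for every x ∈ E the sequence of partial sums Σ_{m=0}^{N} c_m·a^m·x (c_m ∈ ℂ) converges in the b-adic topology of E; equivalently, E is complete for the decreasing filtration (a^m·E)_{m∈ℕ}, so that ℂ[[a]] acts on E. -/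
/-!
The commutation relation `a (b • e) = b • a e + b² • e` gives `a (b ^ N • e) ∈ b ^ N • E` and
`a ^ k (b ^ N • e) ≡ b ^ N • a ^ k e` modulo `b ^ (N + 1) • E`, so the hypothesis `a ^ k E ⊆ b E`
yields `a ^ (k N) E ⊆ b ^ N E`: `a` is topologically nilpotent and continuous for the `b`-adic
topology, for which a finite free `ℂ⟦b⟧`-module is Hausdorff and complete. Hence `Σ c_m a^m x`
converges. For the `a`-adic filtration, write `x (m + 1) - x m = a ^ m d_m`; the tails
`t_m = Σ_j a ^ j d_(m + j)` converge and satisfy `t_m = d_m + a t_(m + 1)`, so that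
`x 0 + t_0 - x m = a ^ m t_m` for all `m`.
-/

open Filter Submodule

section Completeness

variable {R : Type*} [CommRing R] {I : Ideal R}
  {M N : Type*} [AddCommGroup M] [Module R M] [AddCommGroup N] [Module R N]

theorem IsAdicComplete.of_linearEquiv [IsAdicComplete I M] (e : M ≃ₗ[R] N) :
    IsAdicComplete I N := by
  have h : ⇑(AdicCompletion.of I N) =
      AdicCompletion.congr I e ∘ AdicCompletion.of I M ∘ e.symm := by
    ext x
    simp [AdicCompletion.map_of]
  rw [← AdicCompletion.of_bijective_iff, h]
  exact (AdicCompletion.congr I e).bijective.comp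
    ((AdicCompletion.of_bijective I M).comp e.symm.bijective)

instance IsAdicComplete.pi {ι : Type*} [Finite ι] (M : ι → Type*) [∀ i, AddCommGroup (M i)]
    [∀ i, Module R (M i)] [∀ i, IsAdicComplete I (M i)] : IsAdicComplete I (∀ i, M i) := by
  classical
  have := Fintype.ofFinite ι
  have h : ⇑(AdicCompletion.of I (∀ i, M i)) =
      (AdicCompletion.piEquivOfFintype I M).symm ∘ Pi.map fun i ↦ AdicCompletion.of I (M i) := by
    ext x : 1
    apply (AdicCompletion.piEquivOfFintype I M).injective
    ext i : 1
    ext n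
    simp [AdicCompletion.pi_apply_coe]
  rw [← AdicCompletion.of_bijective_iff, h]
  exact (AdicCompletion.piEquivOfFintype I M).symm.bijective.comp
    (Function.Bijective.piMap fun i ↦ AdicCompletion.of_bijective I (M i))

instance IsAdicComplete.of_free_of_finite [IsAdicComplete I R] [Module.Free R M]
    [Module.Finite R M] : IsAdicComplete I M :=
  .of_linearEquiv (Module.Free.chooseBasis R M).equivFun.symm

theorem Submodule.mem_span_singleton_pow_smul_top_iff (r : R) (n : ℕ) (x : M) :
    x ∈ (Ideal.span {r} ^ n • ⊤ : Submodule R M) ↔ ∃ e, x = r ^ n • e := by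
  rw [Ideal.span_singleton_pow, ideal_span_singleton_smul, mem_smul_pointwise_iff_exists]
  simp [eq_comm]

end Completeness

section AdicLimits

variable {R : Type*} [CommRing R] {I : Ideal R} {M : Type*} [AddCommGroup M] [Module R M]

def AdicTendsto (I : Ideal R) (f : ℕ → M) (y : M) : Prop :=
  ∀ N : ℕ, ∀ᶠ n in atTop, y - f n ∈ (I ^ N • ⊤ : Submodule R M)

theorem AdicTendsto.unique [IsHausdorff I M] {f : ℕ → M} {y y' : M}
    (h : AdicTendsto I f y) (h' : AdicTendsto I f y') : y = y' := by
  refine (IsHausdorff.eq_iff_smodEq (I := I)).mpr fun N ↦ SModEq.sub_mem.mpr ?_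
  obtain ⟨n, hn, hn'⟩ := ((h N).and (h' N)).exists
  simpa using sub_mem hn hn'

theorem AdicTendsto.map {S : Type*} [Semiring S] [Module S M] {a : M →ₗ[S] M}
    (ha : ∀ N, ∀ x ∈ (I ^ N • ⊤ : Submodule R M), a x ∈ (I ^ N • ⊤ : Submodule R M))
    {f : ℕ → M} {y : M} (h : AdicTendsto I f y) : AdicTendsto I (fun n ↦ a (f n)) (a y) :=
  fun N ↦ (h N).mono fun n hn ↦ by simpa [map_sub] using ha N _ hn

theorem sum_range_sub_sum_range_mem {G : Type*} [AddCommGroup G] {P : AddSubgroup G}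
    {u : ℕ → G} {p : ℕ} (hu : ∀ i ≥ p, u i ∈ P) {m n : ℕ} (hm : p ≤ m) (hn : p ≤ n) :
    ∑ i ∈ Finset.range n, u i - ∑ i ∈ Finset.range m, u i ∈ P := by
  wlog hmn : m ≤ n generalizing m n
  · simpa using neg_mem (this hn hm (le_of_not_ge hmn))
  rw [← Finset.sum_Ico_eq_sub _ hmn]
  exact sum_mem fun i hi ↦ hu i (hm.trans (Finset.mem_Ico.mp hi).1)

theorem exists_adicTendsto_sum [IsPrecomplete I M] {u : ℕ → M} (hu : AdicTendsto I u 0) :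
    ∃ y, AdicTendsto I (fun n ↦ ∑ i ∈ Finset.range n, u i) y := by
  have hu' : ∀ N, ∃ p, ∀ i ≥ p, u i ∈ (I ^ N • ⊤ : Submodule R M) := fun N ↦ by
    simpa using eventually_atTop.mp (hu N)
  choose p hp using hu'
  set s : ℕ → M := fun n ↦ ∑ i ∈ Finset.range n, u i
  have hcauchy : ∀ {m n}, m ≤ n → s (p m) ≡ s (p n) [SMOD (I ^ m • ⊤ : Submodule R M)] := by
    intro m n hmn
    have hu_tail : ∀ i ≥ min (p m) (p n), u i ∈ (I ^ m • ⊤ : Submodule R M) := by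
      intro i hi
      rcases min_le_iff.mp hi with hi | hi
      · exact hp m i hi
      · exact smul_mono_left (Ideal.pow_le_pow_right hmn) (hp n i hi)
    exact SModEq.sub_mem.mpr <| neg_mem_iff.mp <| by
      simpa using sum_range_sub_sum_range_mem (P := (I ^ m • ⊤ : Submodule R M).toAddSubgroup)
        hu_tail (min_le_left _ _) (min_le_right _ _)
  obtain ⟨y, hy⟩ := IsPrecomplete.prec inferInstance hcauchy
  refine ⟨y, fun N ↦ eventually_atTop.mpr ⟨p N, fun n hn ↦ ?_⟩⟩
  have h₁ : y - s (p N) ∈ (I ^ N • ⊤ : Submodule R M) :=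
    neg_mem_iff.mp (by simpa using SModEq.sub_mem.mp (hy N))
  have h₂ := sum_range_sub_sum_range_mem (P := (I ^ N • ⊤ : Submodule R M).toAddSubgroup)
    (hp N) le_rfl hn
  convert add_mem h₁ (neg_mem h₂) using 1
  simp [s]

variable {S : Type*} [Semiring S] [Module S M] {a : M →ₗ[S] M}

theorem adicTendsto_pow_apply_zero
    (hnil : ∀ N, ∃ n, ∀ x, (a ^ n) x ∈ (I ^ N • ⊤ : Submodule R M)) (z : ℕ → M) :
    AdicTendsto I (fun n ↦ (a ^ n) (z n)) 0 := by
  intro N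
  obtain ⟨n₀, hn₀⟩ := hnil N
  refine eventually_atTop.mpr ⟨n₀, fun n hn ↦ ?_⟩
  have hsplit : (a ^ n) (z n) = (a ^ n₀) ((a ^ (n - n₀)) (z n)) := by
    rw [← Module.End.mul_apply, ← pow_add, Nat.add_sub_of_le hn]
  simpa [hsplit] using hn₀ _

theorem exists_sub_mem_range_pow [IsAdicComplete I M]
    (ha : ∀ N, ∀ x ∈ (I ^ N • ⊤ : Submodule R M), a x ∈ (I ^ N • ⊤ : Submodule R M))
    (hnil : ∀ N, ∃ n, ∀ x, (a ^ n) x ∈ (I ^ N • ⊤ : Submodule R M))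
    (x : ℕ → M) (hx : ∀ m, x (m + 1) - x m ∈ LinearMap.range (a ^ m)) :
    ∃ y, ∀ m, y - x m ∈ LinearMap.range (a ^ m) := by
  choose d hd using hx
  set s : ℕ → ℕ → M := fun m n ↦ ∑ j ∈ Finset.range n, (a ^ j) (d (m + j))
  have ht : ∀ m, ∃ t, AdicTendsto I (s m) t :=
    fun m ↦ exists_adicTendsto_sum (adicTendsto_pow_apply_zero hnil _)
  choose t ht using ht
  have hs_succ : ∀ m n, s m (n + 1) = d m + a (s (m + 1) n) := by
    intro m n
    simp only [s, Finset.sum_range_succ', map_sum, pow_succ', Module.End.mul_apply, pow_zero,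
      Module.End.one_apply, add_zero, add_comm, add_left_comm]
  have hrec : ∀ m, t m = d m + a (t (m + 1)) := by
    intro m
    have h₁ : AdicTendsto I (fun n ↦ s m (n + 1)) (t m) :=
      fun N ↦ (tendsto_add_atTop_nat 1).eventually (ht m N)
    have h₂ : AdicTendsto I (fun n ↦ s m (n + 1)) (d m + a (t (m + 1))) :=
      fun N ↦ ((ht (m + 1)).map ha N).mono fun n hn ↦ by simpa [hs_succ] using hn
    exact h₁.unique h₂
  have hy : ∀ m, x 0 + t 0 - x m = (a ^ m) (t m) := by
    intro m
    induction m with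
    | zero => simp
    | succ m ih =>
      rw [pow_succ, Module.End.mul_apply, ← sub_eq_of_eq_add' (hrec m), map_sub, ← ih, hd]
      abel
  exact ⟨x 0 + t 0, fun m ↦ ⟨t m, (hy m).symm⟩⟩

end AdicLimits

section Commutation

variable {R M S : Type*} [CommRing R] [AddCommGroup M] [Module R M] [Semiring S] [Module S M]
  {a : M →ₗ[S] M} {b : R} (hab : ∀ e, a (b • e) - b • a e = (b * b) • e)
include hab

theorem map_pow_smul (N : ℕ) (e : M) : a (b ^ N • e) = b ^ N • (a e + (N * b) • e) := by
  induction N generalizing e with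
  | zero => simp
  | succ N ih =>
    rw [pow_succ', mul_smul, eq_add_of_sub_eq' (hab _), ih]
    simp only [smul_add, smul_smul, Nat.cast_succ]
    module

theorem map_mem_span_singleton_pow_smul_top (N : ℕ) (x : M)
    (hx : x ∈ (Ideal.span {b} ^ N • ⊤ : Submodule R M)) :
    a x ∈ (Ideal.span {b} ^ N • ⊤ : Submodule R M) := by
  obtain ⟨e, rfl⟩ := (mem_span_singleton_pow_smul_top_iff b N x).mp hx
  exact (mem_span_singleton_pow_smul_top_iff b N _).mpr ⟨_, map_pow_smul hab N e⟩

theorem pow_apply_pow_smul_sub_mem (j N : ℕ) (e : M) :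
    (a ^ j) (b ^ N • e) - b ^ N • (a ^ j) e ∈ (Ideal.span {b} ^ (N + 1) • ⊤ : Submodule R M) := by
  induction j with
  | zero => simp
  | succ j ih =>
    have hstep : a (b ^ N • (a ^ j) e) - b ^ N • a ((a ^ j) e) =
        b ^ (N + 1) • ((N : R) • (a ^ j) e) := by
      rw [map_pow_smul hab, smul_add, add_sub_cancel_left, smul_smul, smul_smul, pow_succ]
      module
    have hsplit : (a ^ (j + 1)) (b ^ N • e) - b ^ N • (a ^ (j + 1)) e =
        a ((a ^ j) (b ^ N • e) - b ^ N • (a ^ j) e) +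
          (a (b ^ N • (a ^ j) e) - b ^ N • a ((a ^ j) e)) := by
      simp only [pow_succ', Module.End.mul_apply, map_sub]
      abel
    rw [hsplit, hstep]
    exact add_mem (map_mem_span_singleton_pow_smul_top hab _ _ ih)
      ((mem_span_singleton_pow_smul_top_iff b _ _).mpr ⟨_, rfl⟩)

theorem pow_mul_apply_mem {k : ℕ} (hk : ∀ e, ∃ e', (a ^ k) e = b • e')
    (N : ℕ) (e : M) : (a ^ (k * N)) e ∈ (Ideal.span {b} ^ N • ⊤ : Submodule R M) := by
  induction N with
  | zero => simp
  | succ N ih =>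
    obtain ⟨f, hf⟩ := (mem_span_singleton_pow_smul_top_iff b N _).mp ih
    obtain ⟨g, hg⟩ := hk f
    have hsplit : (a ^ (k * (N + 1))) e =
        ((a ^ k) (b ^ N • f) - b ^ N • (a ^ k) f) + b ^ (N + 1) • g := by
      rw [mul_add, mul_one, add_comm, pow_add, Module.End.mul_apply, hf, hg, smul_smul,
        ← pow_succ, sub_add_cancel]
    rw [hsplit]
    exact add_mem (pow_apply_pow_smul_sub_mem hab k N f)
      ((mem_span_singleton_pow_smul_top_iff b _ _).mpr ⟨_, rfl⟩)

end Commutation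

theorem a_adic_complete_general (E : Type*) [AddCommGroup E] [Module ℂ E]
    [Module (PowerSeries ℂ) E]
    [Module.Free (PowerSeries ℂ) E] [Module.Finite (PowerSeries ℂ) E]
    (a : E →ₗ[ℂ] E)
    (hcomm : ∀ e : E, a ((PowerSeries.X : PowerSeries ℂ) • e) -
        (PowerSeries.X : PowerSeries ℂ) • a e =
        ((PowerSeries.X * PowerSeries.X : PowerSeries ℂ)) • e)
    (k : ℕ)
    (hpole : ∀ e : E, ∃ e' : E, (a ^ k) e = (PowerSeries.X : PowerSeries ℂ) • e') :
    (∀ (c : ℕ → ℂ) (x : E), ∃ y : E, ∀ N : ℕ, ∃ M : ℕ, ∀ n ≥ M,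
      ∃ e' : E, y - ∑ i ∈ Finset.range n, c i • (a ^ i) x =
        ((PowerSeries.X : PowerSeries ℂ) ^ N) • e') ∧
    (∀ x : ℕ → E, (∀ m, x (m + 1) - x m ∈ LinearMap.range (a ^ m)) →
      ∃ y : E, ∀ m, y - x m ∈ LinearMap.range (a ^ m)) := by
  have ha := map_mem_span_singleton_pow_smul_top hcomm
  have hnil : ∀ N, ∃ n, ∀ x,
      (a ^ n) x ∈ (Ideal.span {PowerSeries.X} ^ N • ⊤ : Submodule (PowerSeries ℂ) E) :=
    fun N ↦ ⟨k * N, pow_mul_apply_mem hcomm hpole N⟩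
  refine ⟨fun c x ↦ ?_, exists_sub_mem_range_pow ha hnil⟩
  obtain ⟨y, hy⟩ := exists_adicTendsto_sum (adicTendsto_pow_apply_zero hnil fun i ↦ c i • x)
  refine ⟨y, fun N ↦ ?_⟩
  simpa [mem_span_singleton_pow_smul_top_iff] using eventually_atTop.mp (hy N)

/-- Let `E` be a module over `A = ℂ⟨a,b⟩/(ab-ba-b²)` which is free of finite rank over
`ℂ[[b]]` (where `b` acts as multiplication by the power-series variable and `a` is a
ℂ-linear operator with `a∘b - b∘a = b²`), and suppose `a^k·E ⊂ b·E` for some `k ≥ 1`.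
Then every series `Σ c_m·a^m·x` converges in the `b`-adic topology of `E`; equivalently,
`E` is complete for the decreasing filtration `(a^m·E)`, so that `ℂ[[a]]` acts on `E`. -/
theorem a_adic_complete (E : Type*) [AddCommGroup E] [Module ℂ E]
    [Module (PowerSeries ℂ) E] [IsScalarTower ℂ (PowerSeries ℂ) E]
    [Module.Free (PowerSeries ℂ) E] [Module.Finite (PowerSeries ℂ) E]
    (a : E →ₗ[ℂ] E)
    (hcomm : ∀ e : E, a ((PowerSeries.X : PowerSeries ℂ) • e) -
        (PowerSeries.X : PowerSeries ℂ) • a e =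
        ((PowerSeries.X * PowerSeries.X : PowerSeries ℂ)) • e)
    (k : ℕ) (hk : 0 < k)
    (hpole : ∀ e : E, ∃ e' : E, (a ^ k) e = (PowerSeries.X : PowerSeries ℂ) • e') :
    (∀ (c : ℕ → ℂ) (x : E), ∃ y : E, ∀ N : ℕ, ∃ M : ℕ, ∀ n ≥ M,
      ∃ e' : E, y - ∑ i ∈ Finset.range n, c i • (a ^ i) x =
        ((PowerSeries.X : PowerSeries ℂ) ^ N) • e') ∧
    (∀ x : ℕ → E, (∀ m, x (m + 1) - x m ∈ LinearMap.range (a ^ m)) →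
      ∃ y : E, ∀ m, y - x m ∈ LinearMap.range (a ^ m)) :=
  a_adic_complete_general E a hcomm k hpole
end

section
/- Let k ≥ 1 and let a, b be the generators of A = ℂ⟨a,b⟩/(ab - ba - b^2). For complex numbers r_1,…,r_k and s_1,…,s_k, if (a - r_1·b)(a - r_2·b)···(a - r_k·b) = (a - s_1·b)(a - s_2·b)···(a - s_k·b) in A, then the multisets {r_j + j : j = 1,…,k} and {s_j + j : j = 1,…,k} coincide. -/
open Polynomial

/-- The operator `p ↦ X² p'` on `ℂ[X]`, representing `a`. -/
noncomputable def opA : Module.End ℂ (Polynomial ℂ) :=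
  (LinearMap.mulLeft ℂ (X ^ 2 : ℂ[X])).comp (Polynomial.derivative : ℂ[X] →ₗ[ℂ] ℂ[X])

/-- The operator `p ↦ X p` on `ℂ[X]`, representing `b`. -/
noncomputable def opB : Module.End ℂ (Polynomial ℂ) := LinearMap.mulLeft ℂ (X : ℂ[X])

noncomputable def fgen : Bool → Module.End ℂ (Polynomial ℂ) := fun x => if x then opA else opB

/-- The representation of `A` on `ℂ[X]`. -/
noncomputable def phi : RingQuot ABRel →ₐ[ℂ] Module.End ℂ (Polynomial ℂ) :=
  RingQuot.liftAlgHom ℂ ⟨FreeAlgebra.lift ℂ fgen, by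
    intro x y hxy
    cases hxy
    simp only [map_mul, map_add, FreeAlgebra.lift_ι_apply, fgen, if_true, if_false]
    apply LinearMap.ext; intro p
    simp [opA, opB, Module.End.mul_apply, LinearMap.mulLeft_apply, derivative_mul]
    ring⟩

lemma phi_a : phi aGen = opA := by
  simp [phi, aGen, RingQuot.liftAlgHom_mkAlgHom_apply, fgen]

lemma phi_b : phi bGen = opB := by
  simp [phi, bGen, RingQuot.liftAlgHom_mkAlgHom_apply, fgen]

lemma opA_pow (m : ℕ) : opA (X ^ m) = (m : ℂ) • X ^ (m + 1) := by
  cases m with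
  | zero => simp [opA]
  | succ n =>
    simp [opA, derivative_X_pow, Polynomial.smul_eq_C_mul]
    ring

lemma opB_pow (m : ℕ) : opB (X ^ m) = X ^ (m + 1) := by
  simp [opB, pow_succ, mul_comm]

lemma keyA : ∀ (k : ℕ) (c : Fin k → ℂ) (m : ℕ),
    ((List.ofFn fun j : Fin k => opA - c j • opB).prod) (X ^ m) =
    (∏ j : Fin k, ((m : ℂ) + ((k : ℂ) - 1 - (j : ℕ)) - c j)) • X ^ (m + k) := by
  intro k
  induction k with
  | zero => intro c m; simp
  | succ n ih =>
    intro c m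
    rw [List.ofFn_succ, List.prod_cons, Module.End.mul_apply, ih (fun j => c j.succ) m]
    rw [Fin.prod_univ_succ]
    simp only [map_smul, LinearMap.sub_apply, LinearMap.smul_apply, opA_pow, opB_pow]
    rw [← sub_smul, smul_smul, show m + (n + 1) = m + n + 1 from rfl]
    congr 1
    simp only [Fin.val_succ, Fin.val_zero]
    push_cast
    rw [mul_comm]
    congr 1
    · ring
    · apply Finset.prod_congr rfl
      intro j _
      ring

/-- The characteristic polynomial built from the factorization data. -/
noncomputable def polC (k : ℕ) (c : Fin k → ℂ) : ℂ[X] :=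
  ∏ j : Fin k, (X - C (c j + (j : ℕ) + 1 - k))

lemma polC_roots (k : ℕ) (c : Fin k → ℂ) :
    (polC k c).roots = Multiset.map (fun j : Fin k => c j + (j : ℕ) + 1 - k) Finset.univ.val := by
  rw [polC, Finset.prod_eq_multiset_prod]
  have hmm : Multiset.map (fun j : Fin k => X - C (c j + (j : ℕ) + 1 - k)) Finset.univ.val =
      (Multiset.map (fun j : Fin k => c j + (j : ℕ) + 1 - (k : ℂ)) Finset.univ.val).map
        (fun z : ℂ => X - C z) := by
    rw [Multiset.map_map]; rfl
  rw [hmm]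
  exact Polynomial.roots_multiset_prod_X_sub_C _

lemma polC_eval (k : ℕ) (c : Fin k → ℂ) (m : ℕ) :
    (polC k c).eval (m : ℂ) = ∏ j : Fin k, ((m : ℂ) + ((k : ℂ) - 1 - (j : ℕ)) - c j) := by
  rw [polC, eval_prod]
  apply Finset.prod_congr rfl
  intro j _
  simp
  ring

/-- In `A = ℂ⟨a,b⟩/(ab - ba - b²)`, if
`(a - r_1·b)(a - r_2·b)⋯(a - r_k·b) = (a - s_1·b)(a - s_2·b)⋯(a - s_k·b)` then the
multisets `{r_j + j : j = 1,…,k}` and `{s_j + j : j = 1,…,k}` coincide. -/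
theorem shifted_roots_invariant (k : ℕ) (hk : 1 ≤ k) (r s : Fin k → ℂ)
    (h : (List.ofFn fun j : Fin k => aGen - r j • bGen).prod =
         (List.ofFn fun j : Fin k => aGen - s j • bGen).prod) :
    Multiset.map (fun j : Fin k => r j + ((j : ℕ) + 1 : ℂ)) Finset.univ.val =
    Multiset.map (fun j : Fin k => s j + ((j : ℕ) + 1 : ℂ)) Finset.univ.val := by
  -- transport to operators
  have hop : (List.ofFn fun j : Fin k => opA - r j • opB).prod =
      (List.ofFn fun j : Fin k => opA - s j • opB).prod := by
    have := congrArg phi h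
    rw [map_list_prod, map_list_prod, List.map_ofFn, List.map_ofFn] at this
    simpa only [Function.comp_def, map_sub, map_smul, phi_a, phi_b] using this
  -- evaluate products at each monomial
  have heval : ∀ m : ℕ, (polC k r).eval (m : ℂ) = (polC k s).eval (m : ℂ) := by
    intro m
    have h2 := congrArg (fun f : Module.End ℂ (Polynomial ℂ) => f (X ^ m)) hop
    simp only [keyA] at h2
    rw [polC_eval, polC_eval]
    exact smul_left_injective ℂ (pow_ne_zero (m + k) Polynomial.X_ne_zero) h2
  -- the two polynomials agree on infinitely many points
  have hpoly : polC k r = polC k s := by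
    rw [← sub_eq_zero]
    apply Polynomial.eq_zero_of_infinite_isRoot
    apply Set.Infinite.mono (s := Set.range (Nat.cast : ℕ → ℂ))
    · rintro _ ⟨m, rfl⟩
      simp [Polynomial.IsRoot, heval m]
    · exact Set.infinite_range_of_injective Nat.cast_injective
  -- compare root multisets, shifted by k
  have hroots := congrArg (Multiset.map (fun z : ℂ => z + k)) (congrArg Polynomial.roots hpoly)
  rw [polC_roots, polC_roots, Multiset.map_map, Multiset.map_map] at hroots
  have fix : ∀ c : Fin k → ℂ,
      Multiset.map (fun j : Fin k => c j + ((j : ℕ) + 1 : ℂ)) Finset.univ.val =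
      Multiset.map ((fun z : ℂ => z + k) ∘ fun j : Fin k => c j + (j : ℕ) + 1 - k)
        Finset.univ.val := by
    intro c
    apply Multiset.map_congr rfl
    intro j _
    simp [Function.comp]
    ring
  rw [fix r, fix s]
  exact hroots
end
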